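/- arXiv:0809.4181 — 3 statements merged into one kernel-verified Lean document; each statement's English description precedes it below -/
import Mathlib

section
/- The number P_{n,k} of distinct species visited in a k-sample from D_n(θ) satisfies P(P_{n,k}=p) = [n!/(n-p)!] · B_{k,p}(θ)/(nθ)_k, where B_{k,p}(θ) = (k!/p!) Σ_{b_1,...,b_p ≥ 1, Σ b_q = k} ∏_{q=1}^p (θ)_{b_q}/b_q! is the Bell polynomial in the variables x_i = (θ)_i. -/
open Finset

/-- Rising factorial `(x)_k = x(x+1)⋯(x+k-1)`. -/
noncomputable def rf (x : ℝ) (k : ℕ) : ℝ := ∏ i ∈ Finset.range k, (x + i)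

/-- The Bell polynomial `B_{k,p}(θ)` in the variables `x_i = (θ)_i`:
`B_{k,p}(θ) = (k!/p!) ∑_{b_1,…,b_p ≥ 1, ∑ b_q = k} ∏ (θ)_{b_q}/b_q!`. -/
noncomputable def BellP (θ : ℝ) (k p : ℕ) : ℝ :=
  ((k.factorial : ℝ) / (p.factorial : ℝ)) *
    ∑ b ∈ Finset.Nat.antidiagonalTuple p k,
      if ∀ q, 1 ≤ b q then ∏ q, rf θ (b q) / ((b q).factorial : ℝ) else 0

/-- Unconditional probability of a sample sequence of `k` conditionally i.i.d.
draws from `Sₙ ~ D_n(θ)` (equivalently, the Pólya urn law). -/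
noncomputable def sampleProb (θ : ℝ) {n k : ℕ} (m : Fin k → Fin n) : ℝ :=
  (∏ c : Fin n, rf θ ((Finset.univ.filter fun l => m l = c).card)) /
    rf ((n : ℝ) * θ) k

/-! Group the sample sequences `m : Fin k → Fin n` by their occupancy vector
`c j = #{l | m l = j}`: the weight `∏ j, (θ)_{c j}` of `m` depends only on `c`, and exactly
`k! / ∏ j, (c j)!` sequences share a given `c`. An occupancy vector with `p` nonzero entries is
determined by its support, one of `n.choose p` sets, together with a composition `b` of `k` into
`p` positive parts; hence the numerator is `n.choose p * k! * ∑_b ∏ q, (θ)_{b q} / (b q)!`,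
which is `n! / (n - p)! * B_{k,p}(θ)`. -/

open scoped Nat

lemma Nat.cast_multinomial {β K : Type*} [Field K] [CharZero K] (s : Finset β) (d : β → ℕ) :
    (Nat.multinomial s d : K) = (∑ i ∈ s, d i)! / ∏ i ∈ s, ((d i)! : K) := by
  rw [eq_div_iff (prod_ne_zero_iff.2 fun i _ => Nat.cast_ne_zero.2 (Nat.factorial_ne_zero _)),
    ← Nat.multinomial_spec s d]
  push_cast
  ring

section Occupancy

variable {α ι : Type*} [Fintype α] [Fintype ι] [DecidableEq ι]

def occupancy (m : α → ι) (c : ι) : ℕ := #{l | m l = c}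

lemma sum_occupancy (m : α → ι) : ∑ c, occupancy m c = Fintype.card α :=
  (card_eq_sum_card_fiberwise fun l _ => mem_univ (m l)).symm

lemma image_eq_filter_occupancy_ne_zero (m : α → ι) :
    univ.image m = ({c | occupancy m c ≠ 0} : Finset ι) := by
  ext c
  simp [occupancy]

open MvPolynomial in
lemma card_filter_occupancy_eq [DecidableEq α] (d : ι → ℕ) (hd : ∑ i, d i = Fintype.card α) :
    #{m : α → ι | occupancy m = d} = Nat.multinomial univ d := by
  -- Compare the coefficients of `X ^ d` in two expansions of `(∑ i, X i) ^ |α|`.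
  have hexpand : (∑ i, X i : MvPolynomial ι ℕ) ^ Fintype.card α =
      ∑ m : α → ι, ∏ c, X c ^ occupancy m c := by
    rw [← card_univ, ← prod_const, Fintype.prod_sum]
    refine sum_congr rfl fun m _ => ?_
    rw [← prod_fiberwise' univ m X]
    simp [occupancy]
  have hcoeff := congrArg (coeff (Finsupp.equivFunOnFinite.symm d)) hexpand
  rw [coeff_sum_X_pow_of_fintype, coeff_sum] at hcoeff
  simp only [implies_true, Finsupp.sum_fintype, Finsupp.equivFunOnFinite_symm_apply_apply, hd,
    ↓reduceIte, Finsupp.multinomial_eq_of_support_subset (subset_univ _),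
    Finsupp.coe_equivFunOnFinite_symm, Nat.cast_id, coeff_prod_X_pow, sum_boole] at hcoeff
  rw [hcoeff]
  congr 1
  ext m
  simp [Finsupp.ext_iff, funext_iff, eq_comm]

lemma sum_comp_occupancy [DecidableEq α] {M : Type*} [AddCommMonoid M] (F : (ι → ℕ) → M) :
    ∑ m : α → ι, F (occupancy m) =
      ∑ d ∈ piAntidiag univ (Fintype.card α), Nat.multinomial univ d • F d := by
  rw [← sum_fiberwise_of_maps_to (g := occupancy) fun m _ =>
    mem_piAntidiag.2 ⟨sum_occupancy m, fun c _ => mem_univ c⟩]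
  refine sum_congr rfl fun d hd => ?_
  rw [sum_congr rfl fun m hm => by rw [(mem_filter.1 hm).2], sum_const,
    card_filter_occupancy_eq d (mem_piAntidiag.1 hd).1]

end Occupancy

section Support

variable {κ ι : Type*} [Fintype κ] [Fintype ι]

@[to_additive]
lemma prod_comp_extend_zero {M : Type*} [CommMonoid M] (e : κ ↪ ι) (b : κ → ℕ) (f : ℕ → M)
    (hf : f 0 = 1) : ∏ i, f (Function.extend e b 0 i) = ∏ q, f (b q) := by
  classical
  rw [← prod_subset (subset_univ (univ.map e)) fun i _ hi => ?_, prod_map]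
  · simp [e.injective.extend_apply]
  · rw [Function.extend_apply' _ _ _ (by simpa using hi)]
    exact hf

variable [DecidableEq ι]

lemma extend_comp_eq_self (e : κ ↪ ι) {d : ι → ℕ} (hd : ({i | d i ≠ 0} : Finset ι) = univ.map e) :
    Function.extend e (d ∘ e) 0 = d := by
  funext i
  by_cases hi : ∃ q, e q = i
  · obtain ⟨q, rfl⟩ := hi
    exact e.injective.extend_apply _ _ q
  · have : i ∉ ({i | d i ≠ 0} : Finset ι) := by simpa [hd] using hi
    rw [Function.extend_apply' _ _ _ hi]
    simpa [eq_comm] using this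

variable [DecidableEq κ] {R : Type*} [CommSemiring R]

lemma sum_filter_support_eq_map (e : κ ↪ ι) (g : ℕ → R) (hg : g 0 = 1) (k : ℕ) :
    ∑ d ∈ piAntidiag (univ : Finset ι) k with ({i | d i ≠ 0} : Finset ι) = univ.map e,
        ∏ i, g (d i) =
      ∑ b ∈ piAntidiag (univ : Finset κ) k with ∀ q, b q ≠ 0, ∏ q, g (b q) := by
  symm
  refine sum_nbij' (fun b => Function.extend e b 0) (fun d => d ∘ e) ?_ ?_ ?_ ?_ ?_
  · intro b hb
    simp only [mem_filter, mem_piAntidiag, mem_univ, implies_true, and_true] at hb ⊢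
    refine ⟨by simpa [hb.1] using sum_comp_extend_zero e b id rfl, ?_⟩
    ext i
    by_cases hi : ∃ q, e q = i
    · obtain ⟨q, rfl⟩ := hi
      simpa [e.injective.extend_apply] using hb.2 q
    · simpa [Function.extend_apply' _ _ _ hi] using hi
  · intro d hd
    simp only [mem_filter, mem_piAntidiag, mem_univ, implies_true, and_true] at hd ⊢
    refine ⟨?_, fun q => ?_⟩
    · have hsum := sum_comp_extend_zero e (d ∘ e) id rfl
      rw [extend_comp_eq_self e hd.2] at hsum
      simpa [hd.1] using hsum.symm
    · simpa using hd.2.ge (mem_map_of_mem e (mem_univ q))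
  · intro b _
    exact Function.extend_comp e.injective b 0
  · intro d hd
    exact extend_comp_eq_self e (mem_filter.1 hd).2
  · intro b _
    exact (prod_comp_extend_zero e b g hg).symm

lemma sum_filter_card_support_eq (g : ℕ → R) (hg : g 0 = 1) (k p : ℕ) :
    ∑ d ∈ piAntidiag (univ : Finset ι) k with #{i | d i ≠ 0} = p, ∏ i, g (d i) =
      (Fintype.card ι).choose p •
        ∑ b ∈ piAntidiag (univ : Finset (Fin p)) k with ∀ q, b q ≠ 0, ∏ q, g (b q) := by
  rw [← sum_fiberwise_of_maps_to (g := fun d => ({i | d i ≠ 0} : Finset ι))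
    (t := powersetCard p univ) fun d hd => by simpa using (mem_filter.1 hd).2,
    ← card_univ, ← card_powersetCard, ← sum_const]
  refine sum_congr rfl fun T hT => ?_
  rw [mem_powersetCard] at hT
  let e : Fin p ↪ ι := (T.equivFinOfCardEq hT.2).symm.toEmbedding.trans (.subtype (· ∈ T))
  have he : univ.map e = T := by
    ext i
    simp only [mem_map, mem_univ, true_and, e, Function.Embedding.trans_apply,
      Equiv.coe_toEmbedding, Function.Embedding.subtype_apply]
    refine ⟨?_, fun hi => ⟨T.equivFinOfCardEq hT.2 ⟨i, hi⟩, by simp⟩⟩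
    rintro ⟨q, rfl⟩
    exact Subtype.prop _
  rw [filter_filter]
  convert sum_filter_support_eq_map e g hg k using 2
  · refine filter_congr fun d _ => ?_
    rw [he]
    exact ⟨fun h => h.2, fun h => ⟨h ▸ hT.2, h⟩⟩
  · -- The filters differ only in their `Decidable` instances (`Fin p` has its own for `∀`).
    congr!

end Support

section Species

variable {α ι K : Type*} [Fintype α] [DecidableEq α] [Fintype ι] [DecidableEq ι]
  [Field K] [CharZero K]

lemma sum_prod_occupancy_of_card_image_eq (g : ℕ → K) (hg : g 0 = 1) (p : ℕ) :
    ∑ m : α → ι, (if #(univ.image m) = p then ∏ c, g (occupancy m c) else 0) =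
      (Fintype.card α)! * (Fintype.card ι).choose p *
        ∑ b ∈ piAntidiag (univ : Finset (Fin p)) (Fintype.card α) with ∀ q, b q ≠ 0,
          ∏ q, g (b q) / (b q)! := by
  simp_rw [image_eq_filter_occupancy_ne_zero]
  rw [sum_comp_occupancy fun d => if #{c | d c ≠ 0} = p then ∏ c, g (d c) else 0]
  simp_rw [nsmul_eq_mul, mul_ite, mul_zero]
  rw [← sum_filter]
  calc _ = ∑ d ∈ piAntidiag univ (Fintype.card α) with #{c | d c ≠ 0} = p,
          ((Fintype.card α)! : K) * ∏ c, g (d c) / (d c)! := by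
        refine sum_congr rfl fun d hd => ?_
        rw [Nat.cast_multinomial, (mem_piAntidiag.1 (mem_filter.1 hd).1).1, prod_div_distrib]
        ring
    _ = _ := by
        rw [← mul_sum, sum_filter_card_support_eq (fun t => g t / t !) (by simp [hg]),
          nsmul_eq_mul]
        ring

lemma bellP_eq (θ : ℝ) (k p : ℕ) :
    BellP θ k p = k ! / p ! *
      ∑ b ∈ piAntidiag (univ : Finset (Fin p)) k with ∀ q, b q ≠ 0, ∏ q, rf θ (b q) / (b q)! := by
  simp_rw [BellP, ← piAntidiag_univ_fin_eq_antidiagonalTuple, Nat.one_le_iff_ne_zero, sum_filter]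

end Species

theorem distinct_species_law_general (θ : ℝ) (n k p : ℕ)
    (hpn : p ≤ n) :
    (∑ m : Fin k → Fin n,
        if (Finset.univ.image m).card = p then sampleProb θ m else 0) =
      ((n.factorial : ℝ) / ((n - p).factorial : ℝ)) * BellP θ k p /
        rf ((n : ℝ) * θ) k := by
  have hsample (m : Fin k → Fin n) (P : Prop) [Decidable P] :
      (if P then sampleProb θ m else 0) =
        (if P then ∏ c, rf θ (occupancy m c) else 0) / rf (n * θ) k := by
    split_ifs <;> simp [sampleProb, occupancy]
  have hnum := sum_prod_occupancy_of_card_image_eq (α := Fin k) (ι := Fin n) (rf θ)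
    (prod_range_zero _) p
  simp only [Fintype.card_fin] at hnum
  simp_rw [hsample, ← sum_div, hnum, bellP_eq, Nat.cast_choose ℝ hpn]
  field_simp

/-- The number of distinct species visited by a `k`-sample from `D_n(θ)`
satisfies `P(P_{n,k} = p) = [n!/(n-p)!] · B_{k,p}(θ)/(nθ)_k`. -/
theorem distinct_species_law (θ : ℝ) (hθ : 0 < θ) (n k p : ℕ)
    (hpn : p ≤ n) (hpk : p ≤ k) :
    (∑ m : Fin k → Fin n,
        if (Finset.univ.image m).card = p then sampleProb θ m else 0) =
      ((n.factorial : ℝ) / ((n - p).factorial : ℝ)) * BellP θ k p /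
        rf ((n : ℝ) * θ) k :=
  distinct_species_law_general θ n k p hpn
end

section
/- The transition probabilities for the number of distinct species satisfy P(P_{n,k+1}=p+1 | P_{n,k}=p) = (n-p)θ/(nθ+k) and P(P_{n,k+1}=p | P_{n,k}=p) = (pθ+k)/(nθ+k), and consequently the Bell polynomials B_{k,p}(θ) satisfy the triangular recurrence B_{k+1,p}(θ) = θ B_{k,p-1}(θ) + (pθ+k) B_{k,p}(θ), with B_{k,0}(θ)=B_{0,p}(θ)=0 for k,p ≥ 1 and B_{0,0}(θ)=1. -/
/-!
Appending a draw `c` to a sample `m` multiplies its Pólya-urn probability by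
`(θ + #{l | m l = c}) / (nθ + k)`. Summed over the `n - p` species not yet seen (each counted
zero times) this gives `(n - p)θ / (nθ + k)`; summed over the `p` seen species, whose counts add
up to `k`, it gives `(pθ + k) / (nθ + k)`.

For the Bell polynomials, `B_{k,p}(θ) = k!/p! · [X^k] G^p` with
`G = ∑_{j ≥ 1} (θ)_j X^j / j! = (1 - X)^{-θ} - 1`. The identity
`(a + 1) (θ)_{a+1} / (a+1)! = (θ + a) (θ)_a / a!` says `G' = θG + θ + XG'`, hence
`(G^p)' = pθG^p + pθG^{p-1} + X(G^p)'`, and comparing coefficients of `X^k` gives the recurrence.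
-/

open Finset Classical

theorem rf_succ (x : ℝ) (k : ℕ) : rf x (k + 1) = rf x k * (x + k) := prod_range_succ _ _

theorem Fintype.sum_fin_succ_pi {α M : Type*} [Fintype α] [AddCommMonoid M] {k : ℕ}
    (F : (Fin (k + 1) → α) → M) : ∑ m, F m = ∑ m : Fin k → α, ∑ a, F (Fin.snoc m a) := by
  rw [← (Fin.snocEquiv fun _ => α).sum_comp, Fintype.sum_prod_type, sum_comm]
  rfl

section Sampling

variable {n k : ℕ}

theorem image_univ_snoc (m : Fin k → Fin n) (c : Fin n) :
    univ.image (Fin.snoc m c : Fin (k + 1) → Fin n) = insert c (univ.image m) := by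
  apply coe_injective
  push_cast [coe_image, coe_univ, Set.image_univ, Fin.range_snoc]
  rfl

theorem card_filter_snoc_eq (m : Fin k → Fin n) (c c' : Fin n) :
    #{l | (Fin.snoc m c : Fin (k + 1) → Fin n) l = c'} =
      #{l | m l = c'} + if c = c' then 1 else 0 := by
  rw [card_filter, card_filter, Fin.sum_univ_castSucc]
  simp

theorem sampleProb_snoc (θ : ℝ) (m : Fin k → Fin n) (c : Fin n) :
    sampleProb θ (Fin.snoc m c : Fin (k + 1) → Fin n) =
      (θ + #{l | m l = c}) / (n * θ + k) * sampleProb θ m := by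
  have hfactor : ∀ c', rf θ (#{l | m l = c'} + if c = c' then 1 else 0) =
      rf θ #{l | m l = c'} * if c = c' then θ + #{l | m l = c'} else 1 := by
    intro c'
    split_ifs <;> simp [rf_succ]
  simp only [sampleProb, card_filter_snoc_eq, hfactor, prod_mul_distrib, prod_ite_eq, mem_univ,
    if_true]
  rw [rf_succ, div_mul_div_comm]
  ring

theorem sum_compl_image_sampleProb_snoc (θ : ℝ) (m : Fin k → Fin n) :
    ∑ c ∈ (univ.image m)ᶜ, sampleProb θ (Fin.snoc m c : Fin (k + 1) → Fin n) =
      (n - #(univ.image m)) * θ / (n * θ + k) * sampleProb θ m := by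
  have hunseen : ∀ c ∈ (univ.image m)ᶜ, #{l | m l = c} = 0 := fun c hc => by
    simpa [filter_eq_empty_iff] using hc
  rw [sum_congr rfl fun c hc => by rw [sampleProb_snoc, hunseen c hc], sum_const, card_compl,
    nsmul_eq_mul, Nat.cast_sub (card_le_univ _), Fintype.card_fin, Nat.cast_zero, add_zero]
  ring

theorem sum_image_sampleProb_snoc (θ : ℝ) (m : Fin k → Fin n) :
    ∑ c ∈ univ.image m, sampleProb θ (Fin.snoc m c : Fin (k + 1) → Fin n) =
      (#(univ.image m) * θ + k) / (n * θ + k) * sampleProb θ m := by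
  have hcount : ∑ c ∈ univ.image m, (θ + #{l | m l = c}) = #(univ.image m) * θ + k := by
    rw [sum_add_distrib, sum_const, nsmul_eq_mul, ← Nat.cast_sum, ← card_eq_sum_card_image,
      card_univ, Fintype.card_fin]
  simp only [sampleProb_snoc, div_mul_eq_mul_div, ← sum_div, ← sum_mul, hcount]

theorem sum_sampleProb_new_species (θ : ℝ) (p : ℕ) :
    (∑ m : Fin (k + 1) → Fin n,
        if #(univ.image (Fin.init m)) = p ∧ #(univ.image m) = p + 1 then sampleProb θ m else 0) =
      (n - p) * θ / (n * θ + k) *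
        ∑ m : Fin k → Fin n, if #(univ.image m) = p then sampleProb θ m else 0 := by
  rw [Fintype.sum_fin_succ_pi, mul_sum]
  refine sum_congr rfl fun m _ => ?_
  simp only [Fin.init_snoc, image_univ_snoc, card_insert_eq_ite]
  by_cases h : #(univ.image m) = p
  · subst h
    rw [if_pos rfl, ← sum_compl_image_sampleProb_snoc, ← univ_inter (univ.image m)ᶜ,
      ← sum_ite_mem]
    refine sum_congr rfl fun c _ => ?_
    by_cases hc : c ∈ univ.image m <;> simp [hc]
  · simp [h]

theorem sum_sampleProb_seen_species (θ : ℝ) (p : ℕ) :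
    (∑ m : Fin (k + 1) → Fin n,
        if #(univ.image (Fin.init m)) = p ∧ #(univ.image m) = p then sampleProb θ m else 0) =
      (p * θ + k) / (n * θ + k) *
        ∑ m : Fin k → Fin n, if #(univ.image m) = p then sampleProb θ m else 0 := by
  rw [Fintype.sum_fin_succ_pi, mul_sum]
  refine sum_congr rfl fun m _ => ?_
  simp only [Fin.init_snoc, image_univ_snoc, card_insert_eq_ite]
  by_cases h : #(univ.image m) = p
  · subst h
    rw [if_pos rfl, ← sum_image_sampleProb_snoc, ← univ_inter (univ.image m), ← sum_ite_mem]
    refine sum_congr rfl fun c _ => ?_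
    by_cases hc : c ∈ univ.image m <;> simp [hc]
  · simp [h]

end Sampling

namespace PowerSeries

variable {R : Type*} [CommSemiring R]

theorem coeff_mk_pow (g : ℕ → R) (p k : ℕ) :
    coeff k (mk g ^ p) = ∑ b ∈ Nat.antidiagonalTuple p k, ∏ q, g (b q) := by
  rw [← Fin.prod_const, coeff_prod, finsuppAntidiag, sum_map,
    ← piAntidiag_univ_fin_eq_antidiagonalTuple]
  simp only [coeff_mk]
  exact sum_attach _ fun b : Fin p → ℕ => ∏ q, g (b q)

theorem coeff_X_mul_derivative (f : R⟦X⟧) (k : ℕ) :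
    coeff k (X * d⁄dX R f) = k * coeff k f := by
  cases k with
  | zero => simp
  | succ k => rw [coeff_succ_X_mul, coeff_derivative, mul_comm]; push_cast; rfl

theorem derivative_eq_of_coeff_succ {f : R⟦X⟧} {c d : R}
    (hf : ∀ a : ℕ, (a + 1) * coeff (a + 1) f = (c + a) * coeff a f + if a = 0 then d else 0) :
    d⁄dX R f = C c * f + C d + X * d⁄dX R f := by
  ext a
  rw [coeff_derivative, mul_comm, hf, map_add, map_add, coeff_C_mul, coeff_X_mul_derivative,
    coeff_C]
  split_ifs <;> ring

theorem coeff_succ_pow_succ_of_coeff_succ {f : R⟦X⟧} {c d : R}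
    (hf : ∀ a : ℕ, (a + 1) * coeff (a + 1) f = (c + a) * coeff a f + if a = 0 then d else 0)
    (p k : ℕ) :
    (k + 1) * coeff (k + 1) (f ^ (p + 1)) =
      (p + 1) * d * coeff k (f ^ p) + ((p + 1) * c + k) * coeff k (f ^ (p + 1)) := by
  have hode : d⁄dX R (f ^ (p + 1)) = C ((p + 1) * c) * f ^ (p + 1) +
      C ((p + 1) * d) * f ^ p + X * d⁄dX R (f ^ (p + 1)) := by
    rw [derivative_pow, Nat.add_sub_cancel]
    conv_lhs => rw [derivative_eq_of_coeff_succ hf]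
    simp only [map_add, map_mul, map_natCast, map_one]
    push_cast
    ring
  have hk := congrArg (coeff k) hode
  rw [coeff_derivative, map_add, map_add, coeff_X_mul_derivative, coeff_C_mul, coeff_C_mul] at hk
  rw [mul_comm, hk]
  ring

end PowerSeries

section Bell

open PowerSeries Nat

noncomputable def risingEGF (θ : ℝ) : ℝ⟦X⟧ :=
  mk fun j => if 1 ≤ j then rf θ j / j ! else 0

theorem BellP_eq_coeff_risingEGF_pow (θ : ℝ) (k p : ℕ) :
    BellP θ k p = k ! / p ! * coeff k (risingEGF θ ^ p) := by
  simp only [BellP, risingEGF, coeff_mk_pow, Fintype.prod_ite_zero]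
  -- the two sides differ only in the `Decidable` instance of `∀ q, 1 ≤ b q`
  congr!

theorem coeff_risingEGF_succ (θ : ℝ) (a : ℕ) :
    (a + 1) * coeff (a + 1) (risingEGF θ) =
      (θ + a) * coeff a (risingEGF θ) + if a = 0 then θ else 0 := by
  rcases a with _ | a
  · simp [risingEGF, rf]
  · simp only [risingEGF, coeff_mk, le_add_iff_nonneg_left, zero_le, if_true, add_eq_zero,
      one_ne_zero, and_false, if_false, add_zero, rf_succ, factorial_succ]
    push_cast
    field_simp

theorem BellP_succ (θ : ℝ) (k p : ℕ) (hp : 1 ≤ p) :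
    BellP θ (k + 1) p = θ * BellP θ k (p - 1) + (p * θ + k) * BellP θ k p := by
  obtain ⟨p, rfl⟩ : ∃ p', p = p' + 1 := ⟨p - 1, by omega⟩
  have hrec := coeff_succ_pow_succ_of_coeff_succ (coeff_risingEGF_succ θ) p k
  simp only [BellP_eq_coeff_risingEGF_pow, Nat.add_sub_cancel, factorial_succ]
  push_cast
  field_simp
  linear_combination hrec

theorem BellP_zero_right (θ : ℝ) {k : ℕ} (hk : 1 ≤ k) : BellP θ k 0 = 0 := by
  simp [BellP_eq_coeff_risingEGF_pow, coeff_one, Nat.one_le_iff_ne_zero.mp hk]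

theorem BellP_zero_left (θ : ℝ) {p : ℕ} (hp : 1 ≤ p) : BellP θ 0 p = 0 := by
  simp [BellP_eq_coeff_risingEGF_pow, risingEGF, Nat.one_le_iff_ne_zero.mp hp]

theorem BellP_zero_zero (θ : ℝ) : BellP θ 0 0 = 1 := by
  simp [BellP_eq_coeff_risingEGF_pow]

end Bell

theorem distinct_species_transitions_and_Bell_recurrence_general (θ : ℝ) (n k p : ℕ) :
    ((∑ m : Fin (k + 1) → Fin n,
        if (Finset.univ.image fun l : Fin k => m l.castSucc).card = p ∧
            (Finset.univ.image m).card = p + 1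
        then sampleProb θ m else 0) =
      (((n : ℝ) - p) * θ / ((n : ℝ) * θ + k)) *
        ∑ m : Fin k → Fin n,
          if (Finset.univ.image m).card = p then sampleProb θ m else 0) ∧
    ((∑ m : Fin (k + 1) → Fin n,
        if (Finset.univ.image fun l : Fin k => m l.castSucc).card = p ∧
            (Finset.univ.image m).card = p
        then sampleProb θ m else 0) =
      (((p : ℝ) * θ + k) / ((n : ℝ) * θ + k)) *
        ∑ m : Fin k → Fin n,
          if (Finset.univ.image m).card = p then sampleProb θ m else 0) ∧
    (1 ≤ p → BellP θ (k + 1) p =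
      θ * BellP θ k (p - 1) + ((p : ℝ) * θ + k) * BellP θ k p) ∧
    (1 ≤ k → BellP θ k 0 = 0) ∧ (1 ≤ p → BellP θ 0 p = 0) ∧ BellP θ 0 0 = 1 :=
  ⟨sum_sampleProb_new_species θ p, sum_sampleProb_seen_species θ p, BellP_succ θ k p,
    BellP_zero_right θ, BellP_zero_left θ, BellP_zero_zero θ⟩

/-- Transition probabilities of the number of distinct visited species, and the
resulting triangular recurrence and boundary conditions for the Bell
polynomials `B_{k,p}(θ)`. -/
theorem distinct_species_transitions_and_Bell_recurrence (θ : ℝ) (hθ : 0 < θ)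
    (n k p : ℕ) (hpn : p ≤ n) :
    ((∑ m : Fin (k + 1) → Fin n,
        if (Finset.univ.image fun l : Fin k => m l.castSucc).card = p ∧
            (Finset.univ.image m).card = p + 1
        then sampleProb θ m else 0) =
      (((n : ℝ) - p) * θ / ((n : ℝ) * θ + k)) *
        ∑ m : Fin k → Fin n,
          if (Finset.univ.image m).card = p then sampleProb θ m else 0) ∧
    ((∑ m : Fin (k + 1) → Fin n,
        if (Finset.univ.image fun l : Fin k => m l.castSucc).card = p ∧
            (Finset.univ.image m).card = p
        then sampleProb θ m else 0) =
      (((p : ℝ) * θ + k) / ((n : ℝ) * θ + k)) *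
        ∑ m : Fin k → Fin n,
          if (Finset.univ.image m).card = p then sampleProb θ m else 0) ∧
    (1 ≤ p → BellP θ (k + 1) p =
      θ * BellP θ k (p - 1) + ((p : ℝ) * θ + k) * BellP θ k p) ∧
    (1 ≤ k → BellP θ k 0 = 0) ∧ (1 ≤ p → BellP θ 0 p = 0) ∧ BellP θ 0 0 = 1 :=
  distinct_species_transitions_and_Bell_recurrence_general θ n k p
end

section
/- Let K_n^+ be the first sample size at which all n fragments of a random Dirichlet D_n(θ) partition have been visited (coupon collector time). Then for k ≥ n, P(K_n^+ ≤ k) = n! B_{k,n}(θ)/(nθ)_k; in particular, for θ=1 this equals C(k-1,n-1)/C(n+k-1,k), and in the limit θ→∞ it equals n! S(k,n)/n^k. -/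
open Finset Classical Filter

/-- Stirling numbers of the second kind. -/
def stirling2 : ℕ → ℕ → ℕ
  | 0, 0 => 1
  | 0, _ + 1 => 0
  | _ + 1, 0 => 0
  | k + 1, p + 1 => (p + 1) * stirling2 k (p + 1) + stirling2 k p

/-!
Under the Pólya urn law the probability of a word `m : Fin k → Fin n` depends only on its
vector `b` of fibre sizes, through `∏ c, (θ)_{b c} / (nθ)_k`. Comparing coefficients in
`(x₁ + ⋯ + xₙ)^k` shows that exactly `k! / ∏ c, (b c)!` words have fibre vector `b`, so summing
over the surjective words (all `b c ≥ 1`) gives `n! B_{k,n}(θ) / (nθ)_k`.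

At `θ = 1` every weight `(1)_j / j!` is `1`, so the Bell polynomial counts the compositions of
`k` into `n` positive parts, `C(k-1, n-1)` of them by stars and bars, while `(n)_k = k! C(n+k-1, k)`.
As `θ → ∞` every word has probability tending to `n^{-k}`, and the surjections
`Fin k → Fin n` number `n! S(k, n)` because they obey the recursion of the Stirling numbers:
the first letter is one of `n` values, and the remaining word either is already surjective or
misses exactly that value.
-/

section FiberCard

variable {ι : Type*} [DecidableEq ι] {k : ℕ}

def fiberCard (m : Fin k → ι) (c : ι) : ℕ := #{l | m l = c}

lemma sum_pi_single_eq_fiberCard (m : Fin k → ι) : ∑ l, Pi.single (m l) 1 = fiberCard m := by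
  ext c
  simp [fiberCard, Finset.sum_apply, Pi.single_apply, eq_comm]

lemma surjective_iff_one_le_fiberCard (m : Fin k → ι) :
    Function.Surjective m ↔ ∀ c, 1 ≤ fiberCard m c := by
  simp [fiberCard, Nat.one_le_iff_ne_zero, Function.Surjective]

variable [Fintype ι]

lemma sum_fiberCard (m : Fin k → ι) : ∑ c, fiberCard m c = k := by
  simp only [fiberCard]
  rw [← card_eq_sum_card_fiberwise fun l _ => mem_univ (m l), card_univ, Fintype.card_fin]

open AddMonoidAlgebra in
theorem card_fiberCard_eq {b : ι → ℕ} (hb : ∑ c, b c = k) :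
    #{m : Fin k → ι | fiberCard m = b} = Nat.multinomial univ b := by
  set X : ℕ[ι → ℕ] := ∑ c, single (Pi.single c 1) 1
  have h_words : X ^ k = ∑ m : Fin k → ι, single (fiberCard m) 1 := by
    rw [← Fin.prod_const, Fintype.prod_sum]
    simp only [prod_single, prod_const_one, sum_pi_single_eq_fiberCard]
  have h_multinomial : X ^ k = ∑ b ∈ piAntidiag univ k, single b (Nat.multinomial univ b) := by
    rw [sum_pow_eq_sum_piAntidiag]
    refine sum_congr rfl fun b _ => ?_
    simp only [single_pow, one_pow, prod_single, prod_const_one, natCast_def, single_mul_single,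
      ← Pi.single_smul', smul_eq_mul, mul_one, zero_add, univ_sum_single, Nat.cast_id]
  have := congrArg (fun p : ℕ[ι → ℕ] => p.coeff b) (h_words.symm.trans h_multinomial)
  simpa only [coeff_sum, coeff_single, Finsupp.finsetSum_apply, Finsupp.single_apply,
    sum_boole, Nat.cast_id, sum_ite_eq', mem_piAntidiag, hb, mem_univ, implies_true, and_self,
    if_true] using this

theorem sum_comp_fiberCard {M : Type*} [AddCommMonoid M] (G : (ι → ℕ) → M) :
    ∑ m : Fin k → ι, G (fiberCard m) = ∑ b ∈ piAntidiag univ k, Nat.multinomial univ b • G b := by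
  rw [← sum_fiberwise_of_maps_to (t := piAntidiag univ k) (g := fiberCard)
    (fun m _ => by simp [sum_fiberCard])]
  refine sum_congr rfl fun b hb => ?_
  rw [← card_fiberCard_eq (mem_piAntidiag.1 hb).1, ← sum_const]
  exact sum_congr rfl fun m hm => by rw [(mem_filter.1 hm).2]

end FiberCard

lemma rf_one (j : ℕ) : rf 1 j = j.factorial := by
  rw [rf, ← prod_range_add_one_eq_factorial]
  push_cast
  exact prod_congr rfl fun i _ => add_comm 1 (i : ℝ)

lemma rf_natCast (n k : ℕ) : rf n k = n.ascFactorial k := by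
  rw [rf, Nat.ascFactorial_eq_prod_range]
  push_cast
  rfl

lemma tendsto_rf_mul_div_pow (a : ℝ) (j : ℕ) :
    Tendsto (fun θ => rf (a * θ) j / θ ^ j) atTop (nhds (a ^ j)) := by
  have h_cont : Tendsto (fun t : ℝ => ∏ i ∈ range j, (a + i * t)) (nhds 0) (nhds (a ^ j)) := by
    simpa using (show Continuous fun t : ℝ => ∏ i ∈ range j, (a + i * t) by fun_prop).tendsto 0
  refine (h_cont.comp tendsto_inv_atTop_zero).congr' ?_
  filter_upwards [eventually_ne_atTop 0] with θ hθ
  rw [Function.comp_apply, rf, pow_eq_prod_const, ← prod_div_distrib]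
  exact prod_congr rfl fun i _ => by field_simp

lemma sampleProb_eq (θ : ℝ) {n k : ℕ} (m : Fin k → Fin n) :
    sampleProb θ m = (∏ c, rf θ (fiberCard m c)) / rf (n * θ) k :=
  rfl

lemma factorial_mul_BellP (θ : ℝ) (k n : ℕ) :
    n.factorial * BellP θ k n = ∑ b ∈ piAntidiag univ k, (Nat.multinomial univ b : ℝ) *
      if ∀ q, 1 ≤ b q then ∏ q : Fin n, rf θ (b q) else 0 := by
  rw [BellP, ← mul_assoc, mul_div_cancel₀ _ (by positivity), mul_sum,
    ← piAntidiag_univ_fin_eq_antidiagonalTuple]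
  refine sum_congr rfl fun b hb => ?_
  have h_spec := Nat.multinomial_spec univ b
  rw [(mem_piAntidiag.1 hb).1] at h_spec
  split_ifs
  · rw [← h_spec, prod_div_distrib]
    push_cast
    field_simp
  · simp

theorem sum_surjective_sampleProb (θ : ℝ) (n k : ℕ) :
    ∑ m : Fin k → Fin n, (if Function.Surjective m then sampleProb θ m else 0) =
      n.factorial * BellP θ k n / rf (n * θ) k := by
  have h_words := sum_comp_fiberCard (k := k)
    fun b : Fin n → ℕ => if ∀ q, 1 ≤ b q then ∏ q, rf θ (b q) else 0
  simp only [nsmul_eq_mul] at h_words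
  rw [factorial_mul_BellP, ← h_words, sum_div]
  refine sum_congr rfl fun m _ => ?_
  simp only [surjective_iff_one_le_fiberCard, sampleProb_eq]
  split_ifs <;> simp

lemma card_antidiagonalTuple (n j : ℕ) :
    #(Nat.antidiagonalTuple n j) = (n + j - 1).choose j := by
  rw [← piAntidiag_univ_fin_eq_antidiagonalTuple, ← map_sym_eq_piAntidiag, card_map, sym_univ,
    card_univ, Sym.card_sym_eq_choose, Fintype.card_fin]

lemma card_filter_one_le_antidiagonalTuple {n k : ℕ} (hn : 1 ≤ n) (hkn : n ≤ k) :
    #{b ∈ Nat.antidiagonalTuple n k | ∀ q, 1 ≤ b q} = (k - 1).choose (n - 1) := by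
  have h_shift : {b ∈ Nat.antidiagonalTuple n k | ∀ q, 1 ≤ b q} =
      (Nat.antidiagonalTuple n (k - n)).map (addRightEmbedding 1) := by
    ext b
    simp only [mem_filter, Nat.mem_antidiagonalTuple, Finset.mem_map, addRightEmbedding_apply]
    constructor
    · rintro ⟨hb, hpos⟩
      refine ⟨b - 1, ?_, tsub_add_cancel_of_le hpos⟩
      simp [sum_tsub_distrib _ fun q _ => hpos q, hb]
    · rintro ⟨a, ha, rfl⟩
      refine ⟨?_, fun q => Nat.le_add_left 1 (a q)⟩
      simp only [Pi.add_apply, Pi.one_apply, sum_add_distrib, ha, sum_const, card_univ,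
        Fintype.card_fin, smul_eq_mul, mul_one]
      omega
  rw [h_shift, card_map, card_antidiagonalTuple, show n + (k - n) - 1 = k - 1 by omega]
  exact Nat.choose_symm_of_eq_add (by omega)

lemma factorial_mul_BellP_one {n k : ℕ} (hn : 1 ≤ n) (hkn : n ≤ k) :
    n.factorial * BellP 1 k n = k.factorial * (k - 1).choose (n - 1) := by
  have h_weight (j : ℕ) : rf 1 j / j.factorial = 1 := by
    rw [rf_one, div_self (by positivity)]
  simp only [BellP, h_weight, prod_const_one, ← card_filter_one_le_antidiagonalTuple hn hkn]
  rw [← mul_assoc, mul_div_cancel₀ _ (by positivity), sum_boole]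

section Surjections

open Function

lemma card_filter_fun_fin_succ {β : Type*} [Fintype β] {k : ℕ} (P : (Fin (k + 1) → β) → Prop)
    [DecidablePred P] :
    #{m | P m} = ∑ c, #{m : Fin k → β | P (Fin.cons c m)} := by
  simp only [card_filter]
  rw [← Fintype.sum_equiv (Fin.consEquiv fun _ => β) _ _ fun _ => rfl, Fintype.sum_prod_type]
  rfl

lemma card_surjective_cons {β : Type*} [Fintype β] [DecidableEq β] {k : ℕ} (c : β) :
    #{m : Fin k → β | Surjective (Fin.cons c m : Fin (k + 1) → β)} =
      #{m : Fin k → β | Surjective m} + #{m : Fin k → β | Set.range m = {c}ᶜ} := by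
  have h_cons (m : Fin k → β) :
      Surjective (Fin.cons c m : Fin (k + 1) → β) ↔ {c}ᶜ ⊆ Set.range m := by
    rw [← Set.range_eq_univ, Fin.range_cons, Set.insert_eq, ← Set.compl_subset_iff_union]
  rw [filter_congr fun m _ => h_cons m,
    ← card_filter_add_card_filter_not (fun m : Fin k → β => c ∈ Set.range m), filter_filter,
    filter_filter]
  congr 2 <;> refine filter_congr fun m _ => ?_
  · rw [← Set.range_eq_univ, ← Set.singleton_subset_iff, ← Set.union_subset_iff,
      Set.compl_union_self, Set.univ_subset_iff]
  · rw [Set.Subset.antisymm_iff, Set.subset_compl_singleton_iff, and_comm]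

lemma card_range_eq_compl_singleton {k p : ℕ} (c : Fin (p + 1)) :
    #{m : Fin k → Fin (p + 1) | Set.range m = {c}ᶜ} = #{m : Fin k → Fin p | Surjective m} := by
  symm
  refine card_nbij (c.succAbove ∘ ·) ?_ ?_ ?_
  · intro m hm
    simp only [mem_coe, mem_filter, mem_univ, true_and] at hm ⊢
    rw [Set.range_comp, hm.range_eq, Set.image_univ, Fin.range_succAbove]
  · exact fun m _ m' _ h => funext fun l => Fin.succAbove_right_injective (congrFun h l)
  · intro m hm
    simp only [mem_coe, mem_filter, mem_univ, true_and] at hm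
    obtain ⟨m', rfl⟩ := Set.range_subset_range_iff_exists_comp.1
      (hm.trans_subset (Fin.range_succAbove c).symm.subset)
    refine ⟨m', ?_, rfl⟩
    simp only [mem_coe, mem_filter, mem_univ, true_and]
    rw [← Set.range_eq_univ]
    apply Set.image_injective.2 (Fin.succAbove_right_injective (p := c))
    rwa [Set.image_univ, Fin.range_succAbove, ← Set.range_comp]

theorem card_surjective_fin (k n : ℕ) :
    #{m : Fin k → Fin n | Surjective m} = n.factorial * Nat.stirlingSecond k n := by
  induction k generalizing n with
  | zero => cases n <;> simp [Surjective]
  | succ k ih =>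
    cases n with
    | zero => simp
    | succ p =>
      rw [card_filter_fun_fin_succ]
      simp only [card_surjective_cons, card_range_eq_compl_singleton, sum_const, card_univ,
        Fintype.card_fin, smul_eq_mul, ih, Nat.stirlingSecond_succ_succ, Nat.factorial_succ]
      ring

lemma stirling2_eq_stirlingSecond : ∀ k n, stirling2 k n = Nat.stirlingSecond k n
  | 0, 0 | 0, _ + 1 | _ + 1, 0 => rfl
  | k + 1, p + 1 => by
    rw [stirling2, Nat.stirlingSecond_succ_succ, stirling2_eq_stirlingSecond k (p + 1),
      stirling2_eq_stirlingSecond k p]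

end Surjections

lemma tendsto_sampleProb {n k : ℕ} (hn : 1 ≤ n) (m : Fin k → Fin n) :
    Tendsto (fun θ => sampleProb θ m) atTop (nhds (1 / (n : ℝ) ^ k)) := by
  have h_num : Tendsto (fun θ => ∏ c, rf θ (fiberCard m c) / θ ^ fiberCard m c) atTop (nhds 1) := by
    simpa using tendsto_finsetProd univ fun c _ => tendsto_rf_mul_div_pow 1 (fiberCard m c)
  have h_den := tendsto_rf_mul_div_pow n k
  refine (h_num.div h_den (by positivity)).congr' ?_
  filter_upwards [eventually_ne_atTop 0] with θ hθ
  rw [Pi.div_apply, prod_div_distrib, prod_pow_eq_pow_sum, sum_fiberCard,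
    div_div_div_cancel_right₀ (pow_ne_zero k hθ), sampleProb_eq]

theorem sum_surjective_sampleProb_one {n k : ℕ} (hn : 1 ≤ n) (hkn : n ≤ k) :
    ∑ m : Fin k → Fin n, (if Function.Surjective m then sampleProb 1 m else 0) =
      (k - 1).choose (n - 1) / (n + k - 1).choose k := by
  rw [sum_surjective_sampleProb, factorial_mul_BellP_one hn hkn, mul_one, rf_natCast,
    Nat.ascFactorial_eq_factorial_mul_choose']
  push_cast
  rw [mul_div_mul_left _ _ (by positivity)]

theorem tendsto_sum_surjective_sampleProb {n k : ℕ} (hn : 1 ≤ n) :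
    Tendsto (fun θ => ∑ m : Fin k → Fin n, if Function.Surjective m then sampleProb θ m else 0)
      atTop (nhds (n.factorial * Nat.stirlingSecond k n / (n : ℝ) ^ k)) := by
  have h_word (m : Fin k → Fin n) :
      Tendsto (fun θ => if Function.Surjective m then sampleProb θ m else 0) atTop
        (nhds (if Function.Surjective m then 1 / (n : ℝ) ^ k else 0)) := by
    split_ifs
    exacts [tendsto_sampleProb hn m, tendsto_const_nhds]
  have h_count : ∑ m : Fin k → Fin n, (if Function.Surjective m then 1 / (n : ℝ) ^ k else 0) =
      n.factorial * Nat.stirlingSecond k n / n ^ k := by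
    rw [sum_ite, sum_const_zero, add_zero, sum_const, nsmul_eq_mul, card_surjective_fin]
    push_cast
    ring
  exact h_count ▸ tendsto_finsetSum univ fun m _ => h_word m

/-- Coupon collector: for `k ≥ n`, the probability that all `n` fragments have
been visited by time `k` (i.e. `K_n⁺ ≤ k`, the sample function is surjective)
equals `n! B_{k,n}(θ)/(nθ)_k`; for `θ = 1` it is `C(k-1,n-1)/C(n+k-1,k)`, and
as `θ → ∞` it converges to `n! S(k,n)/n^k`. -/
theorem coupon_collector (n k : ℕ) (hn : 1 ≤ n) (hkn : n ≤ k) :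
    (∀ θ : ℝ, 0 < θ →
      (∑ m : Fin k → Fin n,
          if Function.Surjective m then sampleProb θ m else 0) =
        (n.factorial : ℝ) * BellP θ k n / rf ((n : ℝ) * θ) k) ∧
    (∑ m : Fin k → Fin n,
        if Function.Surjective m then sampleProb 1 m else 0) =
      ((k - 1).choose (n - 1) : ℝ) / ((n + k - 1).choose k : ℝ) ∧
    Tendsto
      (fun θ : ℝ => ∑ m : Fin k → Fin n,
        if Function.Surjective m then sampleProb θ m else 0)
      atTop
      (nhds ((n.factorial : ℝ) * (stirling2 k n : ℝ) / (n : ℝ) ^ k)) := by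
  rw [stirling2_eq_stirlingSecond]
  exact ⟨fun θ _ => sum_surjective_sampleProb θ n k, sum_surjective_sampleProb_one hn hkn,
    tendsto_sum_surjective_sampleProb hn⟩
end
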